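/- The quadrilateral transformation is 2-periodic on parallelogram-type quadrilaterals: let x₀, x₁ ∈ ℝ² be nonzero and set x₂ = −x₀ and x₃ = −x₁ (so that ‖x₀‖ = ‖x₂‖, ‖x₁‖ = ‖x₃‖ and the centroid is the origin). Then applying the k = 4 polygon transformation twice to Q⁽⁰⁾ = (x₀, x₁, x₂, x₃) returns the original quadrilateral: Q⁽²⁾ = Q⁽⁰⁾. In particular, for ‖x₀‖ ≠ ‖x₁‖ the iteration does not converge, so the polygon transformation has no globally attracting fixed point for k = 4. -/

import Mathlib

/-! On a parallelogram `(u, v, -u, -v)` the vectors `rᵢ xᵢ` cancel in opposite pairs, so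
`Σ_{j≠i} r_j x_j = -rᵢ xᵢ` and one step is just `xᵢ ↦ rᵢ xᵢ`, that is `u ↦ (‖v‖/‖u‖) u` and
`v ↦ (‖u‖/‖v‖) v`. This swaps the two side lengths while keeping the directions, so a second
step restores the quadrilateral. When `‖u‖ ≠ ‖v‖` the orbit is 2-periodic but not fixed, and a
periodic orbit can only converge if it is constant. -/

/-- One step of the polygon transformation for quadrilaterals (`k = 4`) with
centroid at the origin: `xᵢ′ = (3/4) rᵢ xᵢ − (1/4) Σ_{j≠i} r_j x_j` with
`rᵢ = ‖x_{i−1}‖/‖xᵢ‖`. -/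
noncomputable def quadStep (x : ZMod 4 → EuclideanSpace ℝ (Fin 2)) :
    ZMod 4 → EuclideanSpace ℝ (Fin 2) := fun i =>
  ((3 : ℝ) / 4 * (‖x (i - 1)‖ / ‖x i‖)) • x i
    - (4 : ℝ)⁻¹ • ∑ j ∈ Finset.univ.erase i, (‖x (j - 1)‖ / ‖x j‖) • x j

open Filter Topology Function

theorem Function.IsPeriodicPt.isFixedPt_of_tendsto {α : Type*} [TopologicalSpace α] [T2Space α]
    {f : α → α} {n : ℕ} {x L : α} (hx : IsPeriodicPt f n x) (hn : 0 < n)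
    (h : Tendsto (fun k => f^[k] x) atTop (𝓝 L)) : IsFixedPt f x := by
  have hmul : Tendsto (fun k => k * n) atTop atTop := tendsto_id.atTop_mul_const' hn
  have hx_lim : Tendsto (fun k => f^[k * n] x) atTop (𝓝 L) := h.comp hmul
  have hfx_lim : Tendsto (fun k => f^[k * n + 1] x) atTop (𝓝 L) :=
    h.comp ((tendsto_add_atTop_nat 1).comp hmul)
  simp only [fun k => (hx.const_mul k).eq] at hx_lim
  simp only [iterate_succ_apply, fun k => (hx.apply.const_mul k).eq] at hfx_lim
  exact (tendsto_nhds_unique hfx_lim tendsto_const_nhds).symm.trans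
    (tendsto_nhds_unique hx_lim tendsto_const_nhds)

def parallelogramQuad {E : Type*} [Neg E] (u v : E) : ZMod 4 → E :=
  fun i => if i = 0 then u else if i = 1 then v else if i = 2 then -u else -v

theorem quadStep_parallelogramQuad (u v : EuclideanSpace ℝ (Fin 2)) :
    quadStep (parallelogramQuad u v) =
      parallelogramQuad ((‖v‖ / ‖u‖) • u) ((‖u‖ / ‖v‖) • v) := by
  have huniv : (Finset.univ : Finset (ZMod 4)) = {0, 1, 2, 3} := by decide
  have h4 : ∀ i : ZMod 4, i = 0 ∨ i = 1 ∨ i = 2 ∨ i = 3 := by decide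
  funext i
  rcases h4 i with rfl | rfl | rfl | rfl <;>
  · simp only [quadStep, parallelogramQuad, huniv]
    norm_num (config := { decide := true }) [Finset.sum_insert, Finset.erase_insert,
      Finset.mem_insert, norm_neg]
    module

theorem quadStep_quadStep_parallelogramQuad {u v : EuclideanSpace ℝ (Fin 2)} (hu : u ≠ 0)
    (hv : v ≠ 0) : quadStep (quadStep (parallelogramQuad u v)) = parallelogramQuad u v := by
  have hu' : ‖u‖ ≠ 0 := norm_ne_zero_iff.mpr hu
  have hv' : ‖v‖ ≠ 0 := norm_ne_zero_iff.mpr hv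
  have rescale {a b : ℝ} (ha : a ≠ 0) (hb : b ≠ 0) (w : EuclideanSpace ℝ (Fin 2)) :
      (a / b * (b / a)) • w = w := by
    rw [show a / b * (b / a) = 1 by field_simp, one_smul]
  rw [quadStep_parallelogramQuad, quadStep_parallelogramQuad, norm_smul, norm_smul, smul_smul,
    smul_smul, Real.norm_of_nonneg (by positivity), Real.norm_of_nonneg (by positivity),
    div_mul_cancel₀ _ hu', div_mul_cancel₀ _ hv', rescale hu' hv', rescale hv' hu']

theorem quadStep_parallelogramQuad_ne {u v : EuclideanSpace ℝ (Fin 2)} (hu : u ≠ 0)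
    (huv : ‖u‖ ≠ ‖v‖) : quadStep (parallelogramQuad u v) ≠ parallelogramQuad u v := by
  intro h
  have h0 := congrArg (‖· 0‖) h
  simp only [quadStep_parallelogramQuad, parallelogramQuad, if_pos, norm_smul, norm_div,
    norm_norm] at h0
  rw [div_mul_cancel₀ _ (norm_ne_zero_iff.mpr hu)] at h0
  exact huv h0.symm

/-- The quadrilateral transformation is 2-periodic on parallelogram-type
quadrilaterals `(x₀, x₁, −x₀, −x₁)`; in particular, if `‖x₀‖ ≠ ‖x₁‖` the
iteration does not converge, so the polygon transformation has no globally
attracting fixed point for `k = 4`. -/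
theorem quadStep_two_periodic (x₀ x₁ : EuclideanSpace ℝ (Fin 2))
    (h₀ : x₀ ≠ 0) (h₁ : x₁ ≠ 0)
    (Q : ZMod 4 → EuclideanSpace ℝ (Fin 2))
    (hQ : Q = fun i => if i = 0 then x₀ else if i = 1 then x₁
      else if i = 2 then -x₀ else -x₁) :
    quadStep (quadStep Q) = Q ∧
      (‖x₀‖ ≠ ‖x₁‖ → ∀ L : ZMod 4 → EuclideanSpace ℝ (Fin 2),
        ¬ Filter.Tendsto (fun n => quadStep^[n] Q) Filter.atTop (nhds L)) := by
  change Q = parallelogramQuad x₀ x₁ at hQ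
  subst hQ
  have hperiodic : IsPeriodicPt quadStep 2 (parallelogramQuad x₀ x₁) :=
    quadStep_quadStep_parallelogramQuad h₀ h₁
  exact ⟨hperiodic, fun hne _ hlim =>
    quadStep_parallelogramQuad_ne h₀ hne (hperiodic.isFixedPt_of_tendsto two_pos hlim)⟩
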